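/- (Dichotomy between randomness and structure.) For every positive integer n and all m, ε, δ > 0 there exists C = C(n, m, ε, δ) > 0 with the following property. Let V = (J, (V_j)_{j∈J}, d, H_d) be a hypergraph system with |J| ≤ n, for each e ∈ H_d let B_e ⊆ A_e be a σ-algebra with complex(B_e) ≤ m, and for each f ∈ ∂H_d let B_f ⊆ A_f be a σ-algebra with complex(B_f) ≤ M for some M > 0. Then one of the following holds. (Randomness) There exist σ-algebras B_f ⊆ B'_f ⊆ A_f for all f ∈ ∂H_d such that for every e ∈ H_d and every E_e ∈ B_e one has ℰ_{E_e}(∨_{f∈∂e} B'_f) < ℰ_{E_e}(∨_{f∈∂e} B_f) + ε² and Δ_e(E_e | ∨_{f∈∂e} B'_f) ≤ δ. (Structure) There exist σ-algebras B_f ⊆ B'_f ⊆ A_f for all f ∈ ∂H_d with complex(B'_f) ≤ M + C for all f ∈ ∂H_d, and some e ∈ H_d and E_e ∈ B_e with ℰ_{E_e}(∨_{f∈∂e} B'_f) ≥ ℰ_{E_e}(∨_{f∈∂e} B_f) + ε². -/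

import Mathlib

open scoped Classical BigOperators MeasureTheory

noncomputable section

/-- Average of a real-valued function over a finite type. -/
def avg {α : Type*} [Fintype α] (f : α → ℝ) : ℝ :=
  (∑ x, f x) / (Fintype.card α)

/-- Real-valued indicator function of a set. -/
def ind {α : Type*} (E : Set α) (x : α) : ℝ := if x ∈ E then 1 else 0

/-- Average of `f` over the set `A`. -/
def avgOn {α : Type*} [Fintype α] (A : Set α) (f : α → ℝ) : ℝ :=
  (∑ x ∈ Finset.univ.filter (· ∈ A), f x) / ((Finset.univ.filter (· ∈ A)).card)

/-- The smallest set of the σ-algebra `m` containing `x`. -/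
def atomAt {α : Type*} (m : MeasurableSpace α) (x : α) : Set α :=
  ⋂₀ {s | MeasurableSet[m] s ∧ x ∈ s}

/-- Conditional expectation: the average of `f` over the smallest `m`-set containing `x`. -/
def cexp {α : Type*} [Fintype α] (m : MeasurableSpace α) (f : α → ℝ) (x : α) : ℝ :=
  avgOn (atomAt m x) f

/-- The `E`-energy of a σ-algebra. -/
def energy {α : Type*} [Fintype α] (E : Set α) (m : MeasurableSpace α) : ℝ :=
  avg (fun x => (cexp m (ind E) x) ^ 2)

/-- Complexity: the least number of sets needed to generate `m` as a σ-algebra. -/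
def complexity {α : Type*} (m : MeasurableSpace α) : ℕ :=
  sInf {n | ∃ S : Finset (Set α), S.card = n ∧ MeasurableSpace.generateFrom (↑S : Set (Set α)) = m}

/-- The σ-algebra `A_e` of sets depending only on the coordinates indexed by `e`. -/
def cylAlg {J : Type*} (V : J → Type*) (e : Finset J) : MeasurableSpace (∀ j, V j) :=
  MeasurableSpace.comap (fun x (j : e) => x j.1) ⊤

/-- The skeleton `∂e = {f ⊊ e : |f| = |e| - 1}`. -/
def skel {J : Type*} (e : Finset J) : Finset (Finset J) :=
  e.image (fun j => e.erase j)

/-- The boundary `∂H` of a hypergraph. -/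
def hbd {J : Type*} (H : Finset (Finset J)) : Finset (Finset J) :=
  H.biUnion skel

/-- The `e`-discrepancy of `E` relative to the σ-algebra `m`. -/
def disc {J : Type*} [Fintype J] (V : J → Type*) [∀ j, Fintype (V j)]
    (e : Finset J) (E : Set (∀ j, V j)) (m : MeasurableSpace (∀ j, V j)) : ℝ :=
  sSup { r | ∃ Ef : Finset J → Set (∀ j, V j),
    (∀ f ∈ skel e, MeasurableSet[cylAlg V f] (Ef f)) ∧
    r = |avg (fun x => (ind E x - cexp m (ind E) x) * ∏ f ∈ skel e, ind (Ef f) x)| }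

/-- A growth function: increasing on positives and at least `1 + x`. -/
def IsGrowth (F : ℝ → ℝ) : Prop :=
  (∀ x y, 0 < x → x < y → F x < F y) ∧ ∀ x, 0 < x → 1 + x ≤ F x

/-- An atom of a σ-algebra on a finite set: a minimal non-empty measurable set. -/
def IsAtomOf {α : Type*} (m : MeasurableSpace α) (A : Set α) : Prop :=
  MeasurableSet[m] A ∧ A.Nonempty ∧ ∀ s, MeasurableSet[m] s → s ⊆ A → s = ∅ ∨ s = A

end

/-!
Energy increment. The potential of a family `B'` is the sum of the energies
`ℰ_E(⨆ f ∈ ∂e, B'_f)` over `e ∈ H` and `E ∈ B_e`. A σ-algebra of complexity at most `m` has at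
most `2^(2^m)` members and energies lie in `[0, 1]`, so the potential is at most `2^n · 2^(2^m)`.
If some `E ∈ B_e` has `e`-discrepancy above `δ`, adjoin the witnessing sets `E_f ∈ A_f` to the
`B'_f`: the witness `∏ 1_{E_f}` becomes constant on the atoms of the new join, so by Pythagoras and
Cauchy–Schwarz the energy of `E`, hence the potential, grows by `δ²`, while each complexity grows
by at most one. Starting from `B' = B`, after fewer than `C > 2^n · 2^(2^m) / δ²` steps either no
discrepancy exceeds `δ` (randomness) or some energy has grown by `ε²` (structure).
-/

section Atoms

variable {α : Type*}

lemma mem_atomAt (m : MeasurableSpace α) (x : α) : x ∈ atomAt m x := fun _ hs => hs.2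

lemma atomAt_subset {m : MeasurableSpace α} {s : Set α} (hs : MeasurableSet[m] s) {x : α}
    (hx : x ∈ s) : atomAt m x ⊆ s :=
  Set.sInter_subset_of_mem ⟨hs, hx⟩

lemma atomAt_anti {m m' : MeasurableSpace α} (h : m ≤ m') (x : α) :
    atomAt m' x ⊆ atomAt m x :=
  fun _ hy s hs => hy s ⟨h _ hs.1, hs.2⟩

lemma mem_iff_of_mem_atomAt {m : MeasurableSpace α} {s : Set α} (hs : MeasurableSet[m] s)
    {x y : α} (h : y ∈ atomAt m x) : y ∈ s ↔ x ∈ s :=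
  ⟨fun hy => by_contra fun hx => atomAt_subset hs.compl hx h hy, fun hx => atomAt_subset hs hx h⟩

variable [Finite α]

lemma measurableSet_atomAt (m : MeasurableSpace α) (x : α) : MeasurableSet[m] (atomAt m x) :=
  MeasurableSet.sInter (Set.to_countable _) fun _ ht => ht.1

lemma mem_atomAt_comm {m : MeasurableSpace α} {x y : α} : y ∈ atomAt m x ↔ x ∈ atomAt m y :=
  ⟨fun h => (mem_iff_of_mem_atomAt (measurableSet_atomAt m y) h).mp (mem_atomAt m y),
    fun h => (mem_iff_of_mem_atomAt (measurableSet_atomAt m x) h).mp (mem_atomAt m x)⟩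

lemma atomAt_eq_of_mem {m : MeasurableSpace α} {x y : α} (h : y ∈ atomAt m x) :
    atomAt m y = atomAt m x :=
  (atomAt_subset (measurableSet_atomAt m x) h).antisymm
    (atomAt_subset (measurableSet_atomAt m y) (mem_atomAt_comm.mp h))

end Atoms

section ConstOnAtoms

variable {α β : Type*}

def ConstOnAtoms (m : MeasurableSpace α) (g : α → β) : Prop :=
  ∀ x y, y ∈ atomAt m x → g y = g x

lemma ConstOnAtoms.mono {m m' : MeasurableSpace α} (h : m ≤ m') {g : α → β}
    (hg : ConstOnAtoms m g) : ConstOnAtoms m' g :=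
  fun x y hy => hg x y (atomAt_anti h x hy)

lemma constOnAtoms_ind {m : MeasurableSpace α} {E : Set α} (hE : MeasurableSet[m] E) :
    ConstOnAtoms m (ind E) := by
  intro x y hy
  simp only [ind, mem_iff_of_mem_atomAt hE hy]

lemma constOnAtoms_prod {ι : Type*} {m : MeasurableSpace α} {s : Finset ι} {g : ι → α → ℝ}
    (hg : ∀ i ∈ s, ConstOnAtoms m (g i)) : ConstOnAtoms m fun x => ∏ i ∈ s, g i x :=
  fun x y hy => Finset.prod_congr rfl fun i hi => hg i hi x y hy

lemma constOnAtoms_cexp [Fintype α] (m : MeasurableSpace α) (f : α → ℝ) :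
    ConstOnAtoms m (cexp m f) := by
  intro x y hy
  simp only [cexp, atomAt_eq_of_mem hy]

end ConstOnAtoms

section Averages

variable {α : Type*}

lemma ind_nonneg (E : Set α) (x : α) : 0 ≤ ind E x := by
  unfold ind; split <;> norm_num

lemma ind_le_one (E : Set α) (x : α) : ind E x ≤ 1 := by
  unfold ind; split <;> norm_num

lemma abs_prod_ind_le_one {ι : Type*} (s : Finset ι) (E : ι → Set α) (x : α) :
    |∏ i ∈ s, ind (E i) x| ≤ 1 := by
  rw [abs_of_nonneg (Finset.prod_nonneg fun i _ => ind_nonneg _ _)]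
  exact Finset.prod_le_one (fun i _ => ind_nonneg _ _) fun i _ => ind_le_one _ _

variable [Fintype α]

lemma avg_mono {f g : α → ℝ} (h : ∀ x, f x ≤ g x) : avg f ≤ avg g :=
  div_le_div_of_nonneg_right (Finset.sum_le_sum fun x _ => h x) (Nat.cast_nonneg _)

lemma avg_nonneg {f : α → ℝ} (h : ∀ x, 0 ≤ f x) : 0 ≤ avg f :=
  div_nonneg (Finset.sum_nonneg fun x _ => h x) (Nat.cast_nonneg _)

lemma avg_le_one {f : α → ℝ} (h : ∀ x, f x ≤ 1) : avg f ≤ 1 :=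
  (avg_mono h).trans <| by simpa [avg] using div_self_le_one (Fintype.card α : ℝ)

lemma sq_avg_le_avg_sq (f : α → ℝ) : avg f ^ 2 ≤ avg fun x => f x ^ 2 := by
  rcases eq_or_ne (Fintype.card α : ℝ) 0 with hN | hN
  · simp [avg, hN]
  calc avg f ^ 2 ≤ (Fintype.card α * ∑ x, f x ^ 2) / (Fintype.card α : ℝ) ^ 2 := by
        rw [avg, div_pow]
        exact div_le_div_of_nonneg_right (sq_sum_le_card_mul_sum_sq ..) (sq_nonneg _)
    _ = avg fun x => f x ^ 2 := by
        rw [avg]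
        field_simp

lemma cexp_ind_nonneg (m : MeasurableSpace α) (E : Set α) (x : α) : 0 ≤ cexp m (ind E) x :=
  div_nonneg (Finset.sum_nonneg fun y _ => ind_nonneg E y) (Nat.cast_nonneg _)

lemma cexp_ind_le_one (m : MeasurableSpace α) (E : Set α) (x : α) : cexp m (ind E) x ≤ 1 := by
  refine div_le_one_of_le₀ ?_ (Nat.cast_nonneg _)
  simpa using Finset.sum_le_card_nsmul _ _ 1 fun y _ => ind_le_one E y

lemma energy_nonneg (E : Set α) (m : MeasurableSpace α) : 0 ≤ energy E m :=
  avg_nonneg fun _ => sq_nonneg _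

lemma energy_le_one (E : Set α) (m : MeasurableSpace α) : energy E m ≤ 1 :=
  avg_le_one fun x => pow_le_one₀ (cexp_ind_nonneg m E x) (cexp_ind_le_one m E x)

end Averages

section Energy

variable {α : Type*} [Fintype α]

lemma sum_cexp_mul (m : MeasurableSpace α) (f : α → ℝ) {g : α → ℝ} (hg : ConstOnAtoms m g) :
    ∑ x, cexp m f x * g x = ∑ x, f x * g x := by
  set N : α → ℝ := fun x => (Finset.univ.filter (· ∈ atomAt m x)).card with hN
  have hN0 : ∀ y, N y ≠ 0 := fun y => by
    simpa [hN, Finset.filter_eq_empty_iff] using ⟨y, mem_atomAt m y⟩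
  have hNeq : ∀ {x y}, y ∈ atomAt m x → N y = N x := fun h => by
    simp only [hN, atomAt_eq_of_mem h]
  -- double counting over the pairs `(x, y)` lying in a common atom
  have hswap : ∀ x y, (if y ∈ atomAt m x then f y * g x / N x else 0) =
      if x ∈ atomAt m y then f y * g y / N y else 0 := by
    intro x y
    by_cases h : y ∈ atomAt m x
    · rw [if_pos h, if_pos (mem_atomAt_comm.mp h), ← hg x y h, hNeq h]
    · rw [if_neg h, if_neg (mt mem_atomAt_comm.mpr h)]
  calc ∑ x, cexp m f x * g x = ∑ x, ∑ y, if y ∈ atomAt m x then f y * g x / N x else 0 := by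
        refine Finset.sum_congr rfl fun x _ => ?_
        rw [cexp, avgOn, Finset.sum_div, Finset.sum_mul, Finset.sum_filter]
        exact Finset.sum_congr rfl fun y _ => by split_ifs <;> ring
    _ = ∑ y, ∑ x, if x ∈ atomAt m y then f y * g y / N y else 0 := by
        rw [Finset.sum_comm]
        simp only [hswap]
    _ = ∑ y, f y * g y := by
        refine Finset.sum_congr rfl fun y _ => ?_
        rw [← Finset.sum_filter, Finset.sum_const, nsmul_eq_mul]
        exact mul_div_cancel₀ _ (hN0 y)

lemma avg_sq_cexp_eq_add_of_le {m m' : MeasurableSpace α} (h : m ≤ m') (f : α → ℝ) :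
    avg (fun x => cexp m' f x ^ 2) =
      avg (fun x => cexp m f x ^ 2) + avg (fun x => (cexp m' f x - cexp m f x) ^ 2) := by
  set u := cexp m f
  set v := cexp m' f
  have hvu : ∑ x, v x * u x = ∑ x, u x * u x :=
    (sum_cexp_mul m' f ((constOnAtoms_cexp m f).mono h)).trans
      (sum_cexp_mul m f (constOnAtoms_cexp m f)).symm
  have hsq : ∀ x, v x ^ 2 = u x ^ 2 + (v x - u x) ^ 2 + 2 * (v x * u x - u x * u x) :=
    fun x => by ring
  rw [avg, avg, avg, ← add_div, Finset.sum_congr rfl fun x _ => hsq x, Finset.sum_add_distrib,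
    Finset.sum_add_distrib, ← Finset.mul_sum, Finset.sum_sub_distrib, hvu]
  simp

lemma energy_mono {m m' : MeasurableSpace α} (h : m ≤ m') (E : Set α) :
    energy E m ≤ energy E m' := by
  rw [energy, energy, avg_sq_cexp_eq_add_of_le h]
  linarith [avg_nonneg fun x => sq_nonneg (cexp m' (ind E) x - cexp m (ind E) x)]

lemma energy_add_sq_le {m m' : MeasurableSpace α} (h : m ≤ m') {E : Set α} {g : α → ℝ}
    (hg : ConstOnAtoms m' g) (hg1 : ∀ x, |g x| ≤ 1) {t : ℝ} (ht0 : 0 ≤ t)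
    (ht : t ≤ |avg fun x => (ind E x - cexp m (ind E) x) * g x|) :
    energy E m + t ^ 2 ≤ energy E m' := by
  set u := cexp m (ind E)
  set v := cexp m' (ind E)
  have hcorr : avg (fun x => (ind E x - u x) * g x) = avg fun x => (v x - u x) * g x := by
    simp only [avg, sub_mul, Finset.sum_sub_distrib, sum_cexp_mul m' (ind E) hg, v]
  have hgsq : ∀ x, ((v x - u x) * g x) ^ 2 ≤ (v x - u x) ^ 2 := fun x => by
    rw [mul_pow]
    exact mul_le_of_le_one_right (sq_nonneg _) ((sq_le_one_iff_abs_le_one _).mpr (hg1 x))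
  calc energy E m + t ^ 2 ≤ energy E m + avg fun x => (v x - u x) ^ 2 := by
        gcongr
        calc t ^ 2 ≤ (avg fun x => (v x - u x) * g x) ^ 2 := by
              rw [← hcorr, ← sq_abs (avg _)]
              exact pow_le_pow_left₀ ht0 ht 2
          _ ≤ avg fun x => ((v x - u x) * g x) ^ 2 := sq_avg_le_avg_sq _
          _ ≤ avg fun x => (v x - u x) ^ 2 := avg_mono hgsq
    _ = energy E m' := by rw [energy, energy, avg_sq_cexp_eq_add_of_le h]

end Energy

section Complexity

open MeasurableSpace

variable {α : Type*}

lemma complexity_le_card {m : MeasurableSpace α} {S : Finset (Set α)}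
    (h : generateFrom (S : Set (Set α)) = m) : complexity m ≤ S.card :=
  Nat.sInf_le ⟨S, rfl, h⟩

lemma exists_card_eq_complexity [Finite α] (m : MeasurableSpace α) :
    ∃ S : Finset (Set α), S.card = complexity m ∧ generateFrom (S : Set (Set α)) = m := by
  have hgen : generateFrom ((Set.toFinite {s : Set α | MeasurableSet[m] s}).toFinset :
      Set (Set α)) = m := by
    rw [Set.Finite.coe_toFinset]
    exact generateFrom_measurableSet
  exact Nat.sInf_mem (s := {n | ∃ S : Finset (Set α), S.card = n ∧
    generateFrom (S : Set (Set α)) = m}) ⟨_, _, rfl, hgen⟩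

lemma complexity_sup_generateFrom_singleton_le [Finite α] (m : MeasurableSpace α) (s : Set α) :
    complexity (m ⊔ generateFrom {s}) ≤ complexity m + 1 := by
  classical
  obtain ⟨S, hS, hgen⟩ := exists_card_eq_complexity m
  calc complexity (m ⊔ generateFrom {s}) ≤ (insert s S).card := by
        refine complexity_le_card ?_
        rw [Finset.coe_insert, Set.insert_eq, ← generateFrom_sup_generateFrom, hgen, sup_comm]
    _ ≤ complexity m + 1 := hS ▸ Finset.card_insert_le s S

lemma mem_of_measurableSet_generateFrom {S : Set (Set α)} {E : Set α}
    (hE : MeasurableSet[generateFrom S] E) {x y : α} (hxy : ∀ s ∈ S, y ∈ s ↔ x ∈ s)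
    (hx : x ∈ E) : y ∈ E := by
  induction hE generalizing x y with
  | basic s hs => exact (hxy s hs).mpr hx
  | empty => exact hx.elim
  | compl s _ ih => exact fun hy => hx (ih (fun t ht => (hxy t ht).symm) hy)
  | iUnion g _ ih =>
      obtain ⟨i, hi⟩ := Set.mem_iUnion.mp hx
      exact Set.mem_iUnion.mpr ⟨i, ih i hxy hi⟩

lemma card_measurableSet_le [Fintype α] (m : MeasurableSpace α) :
    (Finset.univ.filter fun E : Set α => MeasurableSet[m] E).card ≤ 2 ^ 2 ^ complexity m := by
  classical
  obtain ⟨S, hS, hgen⟩ := exists_card_eq_complexity m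
  let sig : α → (S → Bool) := fun x s => decide (x ∈ (s : Set α))
  have hsig : ∀ {x y}, sig y = sig x → ∀ s ∈ (S : Set (Set α)), y ∈ s ↔ x ∈ s :=
    fun hxy s hs => by simpa [sig] using congrFun hxy ⟨s, hs⟩
  have hsub : ∀ {E F : Set α}, MeasurableSet[m] F → sig '' E ⊆ sig '' F → E ⊆ F := by
    intro E F hF hEF x hx
    obtain ⟨z, hz, hzx⟩ := hEF (Set.mem_image_of_mem sig hx)
    rw [← hgen] at hF
    exact mem_of_measurableSet_generateFrom hF (hsig hzx.symm) hz
  have hinj : Set.InjOn (fun E => sig '' E) (Finset.univ.filter fun E => MeasurableSet[m] E) := by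
    intro E hE F hF (hEF : sig '' E = sig '' F)
    simp only [Finset.coe_filter, Finset.mem_univ, true_and, Set.mem_ofPred_eq] at hE hF
    exact (hsub hF hEF.subset).antisymm (hsub hE hEF.symm.subset)
  calc _ ≤ (Finset.univ : Finset (Set (S → Bool))).card :=
        Finset.card_le_card_of_injOn _ (fun _ _ => Finset.mem_univ _) hinj
    _ = 2 ^ 2 ^ complexity m := by simp [Fintype.card_set, hS]

end Complexity

section Refinement

open MeasurableSpace

variable {ι α : Type*}

noncomputable def refineAlong (B : ι → MeasurableSpace α) (s : Finset ι) (Ef : ι → Set α)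
    (f : ι) : MeasurableSpace α :=
  if f ∈ s then B f ⊔ generateFrom {Ef f} else B f

variable {B : ι → MeasurableSpace α} {s : Finset ι} {Ef : ι → Set α} {f : ι}

lemma le_refineAlong : B f ≤ refineAlong B s Ef f := by
  unfold refineAlong
  split_ifs
  exacts [le_sup_left, le_rfl]

lemma measurableSet_refineAlong (hf : f ∈ s) : MeasurableSet[refineAlong B s Ef f] (Ef f) := by
  rw [refineAlong, if_pos hf]
  exact le_sup_right (a := B f) _ (measurableSet_generateFrom rfl)

lemma refineAlong_le {A : MeasurableSpace α} (hB : B f ≤ A)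
    (hEf : f ∈ s → MeasurableSet[A] (Ef f)) : refineAlong B s Ef f ≤ A := by
  unfold refineAlong
  split_ifs with hf
  exacts [sup_le hB (generateFrom_le fun t ht => (Set.mem_singleton_iff.mp ht) ▸ hEf hf), hB]

lemma complexity_refineAlong_le [Finite α] :
    complexity (refineAlong B s Ef f) ≤ complexity (B f) + 1 := by
  unfold refineAlong
  split_ifs
  exacts [complexity_sup_generateFrom_singleton_le _ _, Nat.le_succ _]

end Refinement

section Potential

variable {ι α : Type*} [Fintype α]

noncomputable def potential (H : Finset (Finset ι)) (Be B : Finset ι → MeasurableSpace α) : ℝ :=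
  ∑ e ∈ H, ∑ E ∈ Finset.univ.filter (MeasurableSet[Be e] ·), energy E (⨆ f ∈ skel e, B f)

variable {H : Finset (Finset ι)} {Be B B' : Finset ι → MeasurableSpace α}

lemma potential_nonneg : 0 ≤ potential H Be B :=
  Finset.sum_nonneg fun _ _ => Finset.sum_nonneg fun _ _ => energy_nonneg _ _

lemma potential_le {c : ℕ} (hc : ∀ e ∈ H, complexity (Be e) ≤ c) :
    potential H Be B ≤ H.card * 2 ^ 2 ^ c := by
  have hterm : ∀ e ∈ H, ∑ E ∈ Finset.univ.filter (MeasurableSet[Be e] ·),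
      energy E (⨆ f ∈ skel e, B f) ≤ 2 ^ 2 ^ c := fun e he => by
    calc _ ≤ ((Finset.univ.filter (MeasurableSet[Be e] ·)).card : ℝ) := by
          simpa using Finset.sum_le_card_nsmul _ _ 1 fun E _ => energy_le_one E _
      _ ≤ ((2 ^ 2 ^ c : ℕ) : ℝ) := by
          gcongr
          exact (card_measurableSet_le _).trans (by gcongr <;> simp [hc e he])
      _ = 2 ^ 2 ^ c := by push_cast; rfl
  simpa [potential] using Finset.sum_le_card_nsmul _ _ _ hterm

lemma potential_add_le (hB : ∀ f, B f ≤ B' f) {e : Finset ι} (he : e ∈ H) {E : Set α}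
    (hE : MeasurableSet[Be e] E) {t : ℝ}
    (ht : energy E (⨆ f ∈ skel e, B f) + t ≤ energy E (⨆ f ∈ skel e, B' f)) :
    potential H Be B + t ≤ potential H Be B' := by
  have hgain : ∀ e' E', 0 ≤ energy E' (⨆ f ∈ skel e', B' f) - energy E' (⨆ f ∈ skel e', B f) :=
    fun e' E' => sub_nonneg.mpr (energy_mono (iSup₂_mono fun f _ => hB f) E')
  suffices t ≤ potential H Be B' - potential H Be B by linarith
  simp only [potential, ← Finset.sum_sub_distrib]
  calc t ≤ energy E (⨆ f ∈ skel e, B' f) - energy E (⨆ f ∈ skel e, B f) := by linarith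
    _ ≤ _ := Finset.single_le_sum (fun E' _ => hgain e E') (by simpa using hE)
    _ ≤ _ := Finset.single_le_sum (f := fun e' => ∑ E' ∈ Finset.univ.filter
        (MeasurableSet[Be e'] ·), _) (fun e' _ => Finset.sum_nonneg fun E' _ => hgain e' E') he

end Potential

lemma of_bounded_iteration {X : Type*} {P : ℕ → X → Prop} {G : Prop} {K : ℕ} {x₀ : X} (h₀ : P 0 x₀)
    (hstep : ∀ k < K, ∀ x, P k x → G ∨ ∃ y, P (k + 1) y) (hK : ∀ x, ¬ P K x) : G := by
  by_contra hG
  suffices ∀ k ≤ K, ∃ x, P k x by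
    obtain ⟨x, hx⟩ := this K le_rfl
    exact hK x hx
  intro k
  induction k with
  | zero => exact fun _ => ⟨x₀, h₀⟩
  | succ k ih =>
      intro hk
      obtain ⟨x, hx⟩ := ih (by omega)
      exact (hstep k (by omega) x hx).resolve_left hG

section Hypergraph

variable {J : Type*} {V : J → Type*}

def IsBoundedRefinement (V : J → Type*) (H : Finset (Finset J))
    (B B' : Finset J → MeasurableSpace (∀ j, V j)) (k : ℕ) : Prop :=
  ∀ f ∈ hbd H, B f ≤ B' f ∧ B' f ≤ cylAlg V f ∧ complexity (B' f) ≤ complexity (B f) + k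

variable {H : Finset (Finset J)} {B B' : Finset J → MeasurableSpace (∀ j, V j)} {k : ℕ}

lemma isBoundedRefinement_refl (hB : ∀ f ∈ hbd H, B f ≤ cylAlg V f) :
    IsBoundedRefinement V H B B 0 :=
  fun f hf => ⟨le_rfl, hB f hf, le_rfl⟩

lemma IsBoundedRefinement.mono (h : IsBoundedRefinement V H B B' k) {l : ℕ} (hkl : k ≤ l) :
    IsBoundedRefinement V H B B' l :=
  fun f hf => let ⟨hle, hcyl, hc⟩ := h f hf; ⟨hle, hcyl, hc.trans (by omega)⟩

variable [Fintype J] [∀ j, Fintype (V j)]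

lemma IsBoundedRefinement.refineAlong (h : IsBoundedRefinement V H B B' k)
    {s : Finset (Finset J)} {Ef : Finset J → Set (∀ j, V j)}
    (hEf : ∀ f ∈ s, MeasurableSet[cylAlg V f] (Ef f)) :
    IsBoundedRefinement V H B (refineAlong B' s Ef) (k + 1) :=
  fun f hf => let ⟨hle, hcyl, hc⟩ := h f hf
    ⟨hle.trans le_refineAlong, refineAlong_le hcyl (hEf f),
      complexity_refineAlong_le.trans (by omega)⟩

lemma exists_witness_of_lt_disc {e : Finset J} {E : Set (∀ j, V j)}
    {m : MeasurableSpace (∀ j, V j)} {δ : ℝ} (h : δ < disc V e E m) :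
    ∃ Ef : Finset J → Set (∀ j, V j), (∀ f ∈ skel e, MeasurableSet[cylAlg V f] (Ef f)) ∧
      δ < |avg fun x => (ind E x - cexp m (ind E) x) * ∏ f ∈ skel e, ind (Ef f) x| := by
  obtain ⟨_, ⟨Ef, hEf, rfl⟩, hlt⟩ :=
    exists_lt_of_lt_csSup (by exact ⟨_, fun _ => Set.univ, fun _ _ => MeasurableSet.univ, rfl⟩) h
  exact ⟨Ef, hEf, hlt⟩

lemma exists_refineAlong_energy_add_sq_le (B : Finset J → MeasurableSpace (∀ j, V j))
    {e : Finset J} {E : Set (∀ j, V j)} {δ : ℝ} (hδ : 0 ≤ δ)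
    (h : δ < disc V e E (⨆ f ∈ skel e, B f)) :
    ∃ Ef : Finset J → Set (∀ j, V j), (∀ f ∈ skel e, MeasurableSet[cylAlg V f] (Ef f)) ∧
      energy E (⨆ f ∈ skel e, B f) + δ ^ 2 ≤
        energy E (⨆ f ∈ skel e, refineAlong B (skel e) Ef f) := by
  obtain ⟨Ef, hEf, hlt⟩ := exists_witness_of_lt_disc h
  refine ⟨Ef, hEf, energy_add_sq_le (iSup₂_mono fun f _ => le_refineAlong) ?_
    (abs_prod_ind_le_one _ _) hδ hlt.le⟩
  exact constOnAtoms_prod fun f hf => constOnAtoms_ind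
    (le_biSup (fun f => refineAlong B (skel e) Ef f) hf _ (measurableSet_refineAlong hf))

theorem randomness_or_structure {Be : Finset J → MeasurableSpace (∀ j, V j)} {ε δ : ℝ}
    (hε : 0 < ε) (hδ : 0 < δ) {K : ℕ}
    (hK : ∀ B', potential H Be B' < potential H Be B + K * δ ^ 2)
    (hB : ∀ f ∈ hbd H, B f ≤ cylAlg V f) :
    (∃ B' : Finset J → MeasurableSpace (∀ j, V j),
        (∀ f ∈ hbd H, B f ≤ B' f ∧ B' f ≤ cylAlg V f) ∧
        (∀ e ∈ H, ∀ E : Set (∀ j, V j), MeasurableSet[Be e] E →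
          energy E (⨆ f ∈ skel e, B' f) < energy E (⨆ f ∈ skel e, B f) + ε ^ 2 ∧
          disc V e E (⨆ f ∈ skel e, B' f) ≤ δ)) ∨
      (∃ B' : Finset J → MeasurableSpace (∀ j, V j), IsBoundedRefinement V H B B' K ∧
        (∃ e ∈ H, ∃ E : Set (∀ j, V j), MeasurableSet[Be e] E ∧
          energy E (⨆ f ∈ skel e, B f) + ε ^ 2 ≤ energy E (⨆ f ∈ skel e, B' f))) := by
  refine of_bounded_iteration (x₀ := B) (P := fun k B' => IsBoundedRefinement V H B B' k ∧
      (∀ e ∈ H, ∀ E : Set (∀ j, V j), MeasurableSet[Be e] E →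
        energy E (⨆ f ∈ skel e, B' f) < energy E (⨆ f ∈ skel e, B f) + ε ^ 2) ∧
      potential H Be B + k * δ ^ 2 ≤ potential H Be B')
    ⟨isBoundedRefinement_refl hB, fun e _ E _ => by linarith [pow_pos hε 2], by simp⟩ ?_
    fun B' hB' => by linarith [hK B', hB'.2.2]
  rintro k hk B' ⟨href, hsmall, hpot⟩
  by_cases hdisc : ∀ e ∈ H, ∀ E : Set (∀ j, V j), MeasurableSet[Be e] E →
      disc V e E (⨆ f ∈ skel e, B' f) ≤ δ
  · exact .inl <| .inl ⟨B', fun f hf => ⟨(href f hf).1, (href f hf).2.1⟩,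
      fun e he E hE => ⟨hsmall e he E hE, hdisc e he E hE⟩⟩
  push Not at hdisc
  obtain ⟨e, he, E, hE, hlt⟩ := hdisc
  obtain ⟨Ef, hEf, hgain⟩ := exists_refineAlong_energy_add_sq_le B' hδ.le hlt
  by_cases hstr : ∃ e' ∈ H, ∃ E' : Set (∀ j, V j), MeasurableSet[Be e'] E' ∧
      energy E' (⨆ f ∈ skel e', B f) + ε ^ 2 ≤
        energy E' (⨆ f ∈ skel e', refineAlong B' (skel e) Ef f)
  · exact .inl <| .inr ⟨_, (href.refineAlong hEf).mono hk, hstr⟩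
  push Not at hstr
  refine .inr ⟨_, href.refineAlong hEf, hstr, ?_⟩
  have := potential_add_le (H := H) (Be := Be) (fun f => le_refineAlong) he hE hgain
  push_cast
  linarith

end Hypergraph

/-- **Dichotomy between randomness and structure.**
Given σ-algebras `B_e ⊆ A_e` (`e ∈ H_d`) of complexity at most `m` and `B_f ⊆ A_f`
(`f ∈ ∂H_d`) of complexity at most `M`, either one can refine the `B_f` so that all sets
in the `B_e` have small energy increment and small discrepancy (randomness), or one can
refine the `B_f` increasing the complexity by at most `C = C(n, m, ε, δ)` so that some set
in some `B_e` gains `ε²` in energy (structure). -/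
theorem randomness_structure_dichotomy :
    ∀ n : ℕ, 0 < n → ∀ m ε δ : ℝ, 0 < m → 0 < ε → 0 < δ →
    ∃ C : ℝ, 0 < C ∧
    ∀ (J : Type) [Fintype J], Fintype.card J ≤ n →
    ∀ (V : J → Type) [∀ j, Fintype (V j)] [∀ j, Nonempty (V j)]
      (d : ℕ), 1 ≤ d →
    ∀ (H : Finset (Finset J)), (∀ e ∈ H, e.card = d) →
    ∀ (Be : Finset J → MeasurableSpace (∀ j, V j)),
      (∀ e ∈ H, Be e ≤ cylAlg V e ∧ (complexity (Be e) : ℝ) ≤ m) →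
    ∀ M : ℝ, 0 < M →
    ∀ (B : Finset J → MeasurableSpace (∀ j, V j)),
      (∀ f ∈ hbd H, B f ≤ cylAlg V f ∧ (complexity (B f) : ℝ) ≤ M) →
      -- (Randomness)
      (∃ B' : Finset J → MeasurableSpace (∀ j, V j),
        (∀ f ∈ hbd H, B f ≤ B' f ∧ B' f ≤ cylAlg V f) ∧
        (∀ e ∈ H, ∀ E : Set (∀ j, V j), MeasurableSet[Be e] E →
          energy E (⨆ f ∈ skel e, B' f) < energy E (⨆ f ∈ skel e, B f) + ε ^ 2 ∧
          disc V e E (⨆ f ∈ skel e, B' f) ≤ δ)) ∨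
      -- (Structure)
      (∃ B' : Finset J → MeasurableSpace (∀ j, V j),
        (∀ f ∈ hbd H, B f ≤ B' f ∧ B' f ≤ cylAlg V f ∧
          (complexity (B' f) : ℝ) ≤ M + C) ∧
        (∃ e ∈ H, ∃ E : Set (∀ j, V j), MeasurableSet[Be e] E ∧
          energy E (⨆ f ∈ skel e, B f) + ε ^ 2 ≤ energy E (⨆ f ∈ skel e, B' f))) := by
  intro n _ m ε δ _ hε hδ
  obtain ⟨K, hK⟩ := exists_nat_gt ((2 : ℝ) ^ n * 2 ^ 2 ^ ⌊m⌋₊ / δ ^ 2)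
  refine ⟨K, (by positivity : (0 : ℝ) < _).trans hK, ?_⟩
  intro J _ hJ V _ _ _ _ H _ Be hBe M _ B hB
  have hH : (H.card : ℝ) ≤ 2 ^ n := by
    exact_mod_cast (Finset.card_le_univ H).trans
      ((Fintype.card_finset (α := J)).trans_le (Nat.pow_le_pow_right two_pos hJ))
  have hpot : ∀ B', potential H Be B' < potential H Be B + K * δ ^ 2 := fun B' =>
    calc potential H Be B' ≤ H.card * 2 ^ 2 ^ ⌊m⌋₊ :=
          potential_le fun e he => Nat.le_floor (hBe e he).2
      _ ≤ 2 ^ n * 2 ^ 2 ^ ⌊m⌋₊ := by gcongr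
      _ < K * δ ^ 2 := (div_lt_iff₀ (by positivity)).mp hK
      _ ≤ potential H Be B + K * δ ^ 2 := le_add_of_nonneg_left potential_nonneg
  refine (randomness_or_structure hε hδ hpot fun f hf => (hB f hf).1).imp_right ?_
  rintro ⟨B', hB', hstr⟩
  refine ⟨B', fun f hf => ?_, hstr⟩
  obtain ⟨hle, hcyl, hcompl⟩ := hB' f hf
  have : (complexity (B' f) : ℝ) ≤ complexity (B f) + K := by exact_mod_cast hcompl
  exact ⟨hle, hcyl, by linarith [(hB f hf).2]⟩
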